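/- arXiv:0808.0377 — 4 statements merged into one kernel-verified Lean document; each statement's English description precedes it below -/
import Mathlib

section
/- Let $G$ and $H$ be finite non-abelian groups with isomorphic non-commuting graphs. If $|G| = |H|$, then the multisets of centralizer orders $\{|C_G(g)| : g \in G \setminus Z(G)\}$ and $\{|C_H(h)| : h \in H \setminus Z(H)\}$ (counted with multiplicity) are equal. -/
/-- The non-commuting graph of a group `G`: vertices are the non-central
elements of `G`, and two vertices are adjacent iff they do not commute. -/
def noncommutingGraph (G : Type*) [Group G] :
    SimpleGraph {x : G // x ∉ Subgroup.center G} where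
  Adj a b := ¬ Commute (a : G) (b : G)
  symm := ⟨fun _ _ h hc => h hc.symm⟩
  loopless := ⟨fun a h => h (Commute.refl (a : G))⟩

/-! In a finite group the centralizer of `g` and the set of elements not commuting with `g`
partition the group, so `|C_G(g)| = |G| - deg g` in the non-commuting graph. A graph
isomorphism preserves degrees, so for groups of equal order it preserves centralizer orders. -/

theorem Subgroup.nat_card_centralizer_singleton_add_nat_card_not_commute {G : Type*} [Group G]
    [Finite G] (g : G) :
    Nat.card (Subgroup.centralizer ({g} : Set G)) + Nat.card {x : G // ¬ Commute g x} =
      Nat.card G := by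
  classical
  have : (Subgroup.centralizer ({g} : Set G) : Type _) ≃ {x : G // Commute g x} :=
    Equiv.subtypeEquivRight fun _ => Subgroup.mem_centralizer_singleton_iff.trans eq_comm
  rw [Nat.card_congr this, ← Nat.card_sum, Nat.card_congr (Equiv.sumCompl _)]

namespace noncommutingGraph

variable {G H : Type*} [Group G] [Group H]

def neighborSetEquiv (v : {x : G // x ∉ Subgroup.center G}) :
    (noncommutingGraph G).neighborSet v ≃ {x : G // ¬ Commute (v : G) x} where
  toFun w := ⟨w.1, w.2⟩
  invFun x := ⟨⟨x, fun hx => x.2 (Subgroup.mem_center_iff.mp hx _)⟩, x.2⟩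
  left_inv _ := rfl
  right_inv _ := rfl

theorem nat_card_centralizer_add_nat_card_neighborSet [Finite G]
    (v : {x : G // x ∉ Subgroup.center G}) :
    Nat.card (Subgroup.centralizer ({(v : G)} : Set G)) +
      Nat.card ((noncommutingGraph G).neighborSet v) = Nat.card G := by
  rw [Nat.card_congr (neighborSetEquiv v),
    Subgroup.nat_card_centralizer_singleton_add_nat_card_not_commute]

theorem nat_card_centralizer_map_iso [Finite G] [Finite H]
    (φ : noncommutingGraph G ≃g noncommutingGraph H) (hcard : Nat.card G = Nat.card H)
    (v : {x : G // x ∉ Subgroup.center G}) :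
    Nat.card (Subgroup.centralizer ({(φ v : H)} : Set H)) =
      Nat.card (Subgroup.centralizer ({(v : G)} : Set G)) := by
  have hG := nat_card_centralizer_add_nat_card_neighborSet v
  have hH := nat_card_centralizer_add_nat_card_neighborSet (φ v)
  have := Nat.card_congr (φ.mapNeighborSet v)
  omega

end noncommutingGraph

theorem Multiset.map_univ_filter_val_eq_of_equiv {α β γ : Type*} [Fintype α] [Fintype β]
    {p : α → Prop} {q : β → Prop} [DecidablePred p] [DecidablePred q]
    (e : Subtype p ≃ Subtype q) {f : α → γ} {g : β → γ} (hfg : ∀ a, g (e a) = f a) :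
    (Finset.univ.filter p).val.map f = (Finset.univ.filter q).val.map g := by
  rw [← Finset.univ_val_map_subtype_val, ← Finset.univ_val_map_subtype_val,
    ← Finset.map_univ_equiv e]
  simp only [Finset.map_val, Multiset.map_map]
  exact Multiset.map_congr rfl fun a _ => (hfg a).symm

open scoped Classical in
theorem centralizer_orders_multiset_eq_of_noncommuting_graph_iso_general
    {G H : Type*} [Group G] [Group H] [Fintype G] [Fintype H]
    (φ : noncommutingGraph G ≃g noncommutingGraph H)
    (hcard : Fintype.card G = Fintype.card H) :
    Multiset.map (fun g => Nat.card (Subgroup.centralizer ({g} : Set G)))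
      ((Finset.univ.filter (fun g : G => g ∉ Subgroup.center G)).val) =
    Multiset.map (fun h => Nat.card (Subgroup.centralizer ({h} : Set H)))
      ((Finset.univ.filter (fun h : H => h ∉ Subgroup.center H)).val) := by
  rw [← Nat.card_eq_fintype_card, ← Nat.card_eq_fintype_card] at hcard
  exact Multiset.map_univ_filter_val_eq_of_equiv φ.toEquiv
    (noncommutingGraph.nat_card_centralizer_map_iso φ hcard)

open scoped Classical in
theorem centralizer_orders_multiset_eq_of_noncommuting_graph_iso
    {G H : Type*} [Group G] [Group H] [Fintype G] [Fintype H]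
    (hG : ¬ ∀ x y : G, x * y = y * x) (hH : ¬ ∀ x y : H, x * y = y * x)
    (φ : noncommutingGraph G ≃g noncommutingGraph H)
    (hcard : Fintype.card G = Fintype.card H) :
    Multiset.map (fun g => Nat.card (Subgroup.centralizer ({g} : Set G)))
      ((Finset.univ.filter (fun g : G => g ∉ Subgroup.center G)).val) =
    Multiset.map (fun h => Nat.card (Subgroup.centralizer ({h} : Set H)))
      ((Finset.univ.filter (fun h : H => h ∉ Subgroup.center H)).val) :=
  centralizer_orders_multiset_eq_of_noncommuting_graph_iso_general φ hcard
end

section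
/- Let $G$ and $H$ be finite non-abelian groups with isomorphic non-commuting graphs. If $G$ is an AC-group, then $H$ is also an AC-group. -/
/-- A non-abelian group is an AC-group if the centralizer of every
non-central element is abelian. -/
def IsACGroup (G : Type*) [Group G] : Prop :=
  (¬ ∀ x y : G, x * y = y * x) ∧
    ∀ x : G, x ∉ Subgroup.center G →
      ∀ a ∈ Subgroup.centralizer {x}, ∀ b ∈ Subgroup.centralizer {x}, a * b = b * a

/-!
Non-adjacency in the non-commuting graph is commutation of non-central elements, so a group
is an AC-group exactly when commutation is transitive on non-central elements, i.e. when its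
non-commuting graph is complete multipartite. Being complete multipartite is invariant under
graph isomorphism.
-/

namespace noncommutingGraph

variable {G : Type*} [Group G]

theorem isCompleteMultipartite_iff :
    (noncommutingGraph G).IsCompleteMultipartite ↔
      ∀ x : G, x ∉ Subgroup.center G →
        ∀ a ∈ Subgroup.centralizer {x}, ∀ b ∈ Subgroup.centralizer {x}, a * b = b * a := by
  simp only [Subgroup.mem_centralizer_singleton_iff]
  constructor
  · intro hCM x hx a hax b hbx
    by_cases ha : a ∈ Subgroup.center G
    · exact (Subgroup.mem_center_iff.mp ha b).symm
    by_cases hb : b ∈ Subgroup.center G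
    · exact Subgroup.mem_center_iff.mp hb a
    have : ¬ (noncommutingGraph G).Adj ⟨a, ha⟩ ⟨b, hb⟩ :=
      hCM.trans ⟨a, ha⟩ ⟨x, hx⟩ ⟨b, hb⟩ (not_not.mpr hax) (not_not.mpr hbx.symm)
    exact not_not.mp this
  · intro hAC
    refine ⟨fun a x b hax hxb => not_not.mpr ?_⟩
    exact hAC x x.2 a (not_not.mp hax).eq b (not_not.mp hxb).symm.eq

end noncommutingGraph

theorem isACGroup_iff {G : Type*} [Group G] :
    IsACGroup G ↔ (¬ ∀ x y : G, x * y = y * x) ∧ (noncommutingGraph G).IsCompleteMultipartite :=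
  and_congr_right_iff.mpr fun _ => noncommutingGraph.isCompleteMultipartite_iff.symm

theorem isACGroup_of_noncommuting_graph_iso_general
    {G H : Type*} [Group G] [Group H]
    (hH : ¬ ∀ x y : H, x * y = y * x)
    (φ : noncommutingGraph G ≃g noncommutingGraph H)
    (hAC : IsACGroup G) :
    IsACGroup H :=
  isACGroup_iff.mpr ⟨hH, (isACGroup_iff.mp hAC).2.comap φ.symm.toEmbedding⟩

theorem isACGroup_of_noncommuting_graph_iso
    {G H : Type*} [Group G] [Group H] [Finite G] [Finite H]
    (hG : ¬ ∀ x y : G, x * y = y * x) (hH : ¬ ∀ x y : H, x * y = y * x)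
    (φ : noncommutingGraph G ≃g noncommutingGraph H)
    (hAC : IsACGroup G) :
    IsACGroup H :=
  isACGroup_of_noncommuting_graph_iso_general hH φ hAC
end

section
/- Let $q > 3$ be a prime power and let $G$ be a group whose non-commuting graph is isomorphic (as a graph) to the non-commuting graph of the general linear group $\mathrm{GL}(2,q)$. Then $G$ is an AC-group. -/
section NoncommutingGraph

variable {G H : Type*} [Group G] [Group H]

lemma isACGroup_iff_commute :
    IsACGroup G ↔ Nonempty {x : G // x ∉ Subgroup.center G} ∧
      ∀ x y z : {x : G // x ∉ Subgroup.center G},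
        Commute (x : G) y → Commute (x : G) z → Commute (y : G) z := by
  have nonabelian_iff :
      (¬ ∀ x y : G, x * y = y * x) ↔ Nonempty {x : G // x ∉ Subgroup.center G} := by
    simp only [Subgroup.mem_center_iff, not_forall, nonempty_subtype]
    exact exists_comm
  refine and_congr nonabelian_iff ⟨fun h x y z hxy hxz => ?_, fun h x hx a ha b hb => ?_⟩
  · exact h x x.2 y (Subgroup.mem_centralizer_singleton_iff.2 hxy.symm) z
      (Subgroup.mem_centralizer_singleton_iff.2 hxz.symm)
  · by_cases hac : a ∈ Subgroup.center G
    · exact (Subgroup.mem_center_iff.1 hac b).symm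
    by_cases hbc : b ∈ Subgroup.center G
    · exact Subgroup.mem_center_iff.1 hbc a
    exact h ⟨x, hx⟩ ⟨a, hac⟩ ⟨b, hbc⟩ (Subgroup.mem_centralizer_singleton_iff.1 ha).symm
      (Subgroup.mem_centralizer_singleton_iff.1 hb).symm

lemma commute_iff_of_noncommutingGraph_iso (φ : noncommutingGraph G ≃g noncommutingGraph H)
    (x y : {x : G // x ∉ Subgroup.center G}) :
    Commute (φ x : H) (φ y) ↔ Commute (x : G) y :=
  not_iff_not.1 φ.map_adj_iff

lemma IsACGroup.of_noncommutingGraph_iso (φ : noncommutingGraph G ≃g noncommutingGraph H)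
    (hH : IsACGroup H) : IsACGroup G := by
  rw [isACGroup_iff_commute] at hH ⊢
  obtain ⟨⟨x⟩, hH⟩ := hH
  refine ⟨⟨φ.symm x⟩, fun x y z hxy hxz => ?_⟩
  simp only [← commute_iff_of_noncommutingGraph_iso φ] at hxy hxz ⊢
  exact hH _ _ _ hxy hxz

end NoncommutingGraph

namespace LinearMap

open Module

variable {K V : Type*} [Field K] [AddCommGroup V] [Module K V]

lemma mem_adjoin_singleton_of_commute_of_linearIndependent (hV : finrank K V = 2)
    {f g : V →ₗ[K] V} {v : V} (hv : LinearIndependent K ![v, f v]) (hfg : Commute f g) :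
    g ∈ Algebra.adjoin K {f} := by
  let b := basisOfLinearIndependentOfCardEqFinrank hv (by simp [hV])
  obtain ⟨α, β, hgv⟩ : ∃ α β : K, g v = α • v + β • f v := by
    refine ⟨b.repr (g v) 0, b.repr (g v) 1, ?_⟩
    conv_lhs => rw [← b.sum_repr (g v)]
    simp [b, Fin.sum_univ_two]
  -- `g` and `α • 1 + β • f` agree on `f v` because `g (f v) = f (g v)`.
  have hg : g = α • 1 + β • f := by
    refine b.ext fun i => ?_
    fin_cases i
    · simpa [b] using hgv
    · have := congrArg (· v) hfg.eq
      simp only [End.mul_apply] at this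
      simp [b, ← this, hgv]
  rw [hg]
  exact Subalgebra.add_mem _ (Subalgebra.smul_mem _ (Subalgebra.one_mem _) _)
    (Subalgebra.smul_mem _ (Algebra.self_mem_adjoin_singleton K f) _)

lemma commute_of_commute_of_forall_ne_smul_one (hV : finrank K V = 2) {f g h : V →ₗ[K] V}
    (hf : ∀ a : K, f ≠ a • 1) (hg : Commute f g) (hh : Commute f h) : Commute g h := by
  obtain ⟨v, hv⟩ : ∃ v, LinearIndependent K ![v, f v] := by
    by_contra! hdep
    obtain ⟨a, rfl⟩ := exists_eq_smul_id_of_forall_notLinearIndependent hdep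
    exact hf a rfl
  exact Algebra.commute_of_mem_adjoin_singleton_of_commute
    (mem_adjoin_singleton_of_commute_of_linearIndependent hV hv hh) hg.symm

end LinearMap

namespace Matrix.GeneralLinearGroup

variable {K : Type*} [Field K]

lemma commute_of_commute_of_notMem_center {u v w : GL (Fin 2) K}
    (hu : u ∉ Subgroup.center (GL (Fin 2) K)) (huv : Commute u v) (huw : Commute u w) :
    Commute v w := by
  let e : GL (Fin 2) K →* (Fin 2 → K) →ₗ[K] Fin 2 → K :=
    (toLinAlgEquiv' : Matrix (Fin 2) (Fin 2) K ≃ₐ[K] _).toMonoidHom.comp (Units.coeHom _)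
  have he : Function.Injective e := toLinAlgEquiv'.injective.comp Units.val_injective
  rw [← commute_map_iff he] at huv huw ⊢
  refine LinearMap.commute_of_commute_of_forall_ne_smul_one (by simp) (fun a hua => hu ?_)
    huv huw
  rw [mem_center_iff_val_mem_range_scalar]
  refine ⟨a, toLinAlgEquiv'.injective ?_⟩
  rw [scalar_apply, ← smul_one_eq_diagonal, map_smul, map_one]
  exact hua.symm

lemma exists_notMem_center_fin_two :
    ∃ u : GL (Fin 2) K, u ∉ Subgroup.center (GL (Fin 2) K) := by
  refine ⟨mkOfDetNeZero !![1, 1; 0, 1] (by simp), fun hu => ?_⟩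
  obtain ⟨a, ha⟩ := mem_center_iff_val_mem_range_scalar.1 hu
  simpa using congrFun (congrFun ha 0) 1

theorem isACGroup_fin_two : IsACGroup (GL (Fin 2) K) := by
  rw [isACGroup_iff_commute]
  obtain ⟨u, hu⟩ := exists_notMem_center_fin_two (K := K)
  exact ⟨⟨u, hu⟩, fun x y z => commute_of_commute_of_notMem_center x.2⟩

end Matrix.GeneralLinearGroup

theorem isACGroup_of_noncommuting_graph_iso_gl_general
    (F : Type*) [Field F]
    (G : Type*) [Group G]
    (φ : noncommutingGraph G ≃g
      noncommutingGraph (Matrix.GeneralLinearGroup (Fin 2) F)) :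
    IsACGroup G :=
  .of_noncommutingGraph_iso φ Matrix.GeneralLinearGroup.isACGroup_fin_two

theorem isACGroup_of_noncommuting_graph_iso_gl
    (q : ℕ) (hq : IsPrimePow q) (hq3 : 3 < q)
    (F : Type*) [Field F] [Fintype F] (hF : Fintype.card F = q)
    (G : Type*) [Group G]
    (φ : noncommutingGraph G ≃g
      noncommutingGraph (Matrix.GeneralLinearGroup (Fin 2) F)) :
    IsACGroup G :=
  isACGroup_of_noncommuting_graph_iso_gl_general F G φ
end

section
/- Let $q > 3$ be a prime power and let $G$ be a group whose non-commuting graph is isomorphic (as a graph) to the non-commuting graph of the general linear group $\mathrm{GL}(2,q)$. Then $G$ is not nilpotent. -/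
open Subgroup Matrix Matrix.GeneralLinearGroup
open scoped commutatorElement

namespace Subgroup

variable {K : Type*} [Group K]

lemma finite_of_notMem_center {x : K} (hx : x ∉ center K)
    [Finite {x : K // x ∉ center K}] : Finite K := by
  classical
  have : Finite (center K) := Finite.of_injective
    (fun z : center K => (⟨z * x, fun h => hx (by simpa using mul_mem (inv_mem z.2) h)⟩ :
      {x : K // x ∉ center K}))
    (fun z w h => Subtype.ext (mul_right_cancel (congrArg Subtype.val h)))
  exact Finite.of_equiv _ (Equiv.sumCompl (· ∈ center K))

lemma card_center_add_card_compl [Finite K] :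
    Nat.card (center K) + Nat.card {x : K // x ∉ center K} = Nat.card K := by
  classical
  rw [← Nat.card_sum]
  exact Nat.card_congr (Equiv.sumCompl (· ∈ center K))

lemma exists_mem_upperCentralSeries_two_notMem_center [Group.IsNilpotent K] {x : K}
    (hx : x ∉ center K) : ∃ y ∈ upperCentralSeries K 2, y ∉ center K := by
  by_contra! h
  have hle : upperCentralSeries K 1 = upperCentralSeries K 2 :=
    le_antisymm (upperCentralSeries_mono K (by norm_num))
      (fun y hy => upperCentralSeries_one K ▸ h y hy)
  exact hx (upperCentralSeries_one K ▸ upperCentralSeries.eq_top (by norm_num) hle ▸ mem_top x)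

lemma card_le_card_center_mul_card_centralizer [Finite K] {x : K}
    (hx : x ∈ upperCentralSeries K 2) :
    Nat.card K ≤ Nat.card (center K) * Nat.card (centralizer {x}) := by
  have hcomm (g : K) : ⁅x, g⁆ ∈ center K := upperCentralSeries_one K ▸ hx g
  -- `g ↦ ⁅x, g⁆` is a homomorphism because its values are central
  let f : K →* center K :=
    { toFun g := ⟨⁅x, g⁆, hcomm g⟩
      map_one' := by ext; simp
      map_mul' g h := by
        ext
        have : g * ⁅x, h⁆ * g⁻¹ = ⁅x, h⁆ := by
          rw [mem_center_iff.mp (hcomm h) g, mul_inv_cancel_right]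
        simp only [commutatorElement_def, Subgroup.coe_mul] at this ⊢
        calc x * (g * h) * x⁻¹ * (g * h)⁻¹
            = x * g * x⁻¹ * g⁻¹ * (g * (x * h * x⁻¹ * h⁻¹) * g⁻¹) := by group
          _ = _ := by rw [this] }
  have hker : f.ker = centralizer {x} := by
    ext g
    simp [f, MonoidHom.mem_ker, Subtype.ext_iff, commutatorElement_eq_one_iff_commute,
      mem_centralizer_singleton_iff, commute_iff_eq, eq_comm]
  rw [← card_mul_index (centralizer {x}), ← hker, index_ker, mul_comm]
  exact Nat.mul_le_mul_right _ (card_le_card_group _)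

end Subgroup

lemma SimpleGraph.Iso.card_not_adj {V W : Type*} {G : SimpleGraph V} {H : SimpleGraph W}
    (φ : G ≃g H) (v : V) :
    Nat.card {w // ¬ H.Adj (φ v) w} = Nat.card {w // ¬ G.Adj v w} :=
  Nat.card_congr (φ.toEquiv.subtypeEquiv fun _ => (not_congr φ.map_adj_iff).symm).symm

namespace noncommutingGraph

variable {K L : Type*} [Group K] [Group L]

lemma card_centralizer_eq [Finite K] (y : {x : K // x ∉ center K}) :
    Nat.card (centralizer {(y : K)}) =
      Nat.card (center K) + Nat.card {w // ¬ (noncommutingGraph K).Adj y w} := by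
  have e : ↥((centralizer {(y : K)} : Set K) \ center K) ≃
      {w // ¬ (noncommutingGraph K).Adj y w} :=
    { toFun w := ⟨⟨w, w.2.2⟩, not_not.mpr (mem_centralizer_singleton_iff.mp w.2.1).symm⟩
      invFun w := ⟨w.1, mem_centralizer_singleton_iff.mpr (not_not.mp w.2).symm, w.1.2⟩
      left_inv _ := rfl
      right_inv _ := rfl }
  have := Set.ncard_sdiff_add_ncard_of_subset (center_le_centralizer {(y : K)})
  rw [← Nat.card_congr e, add_comm]
  simpa only [← Nat.card_coe_set_eq, SetLike.coe_sort_coe] using this.symm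

variable (φ : noncommutingGraph K ≃g noncommutingGraph L)
include φ

lemma card_add_card_center [Finite K] [Finite L] :
    Nat.card K + Nat.card (center L) = Nat.card L + Nat.card (center K) := by
  rw [← card_center_add_card_compl, ← card_center_add_card_compl (K := L),
    Nat.card_congr φ.toEquiv]
  ring

lemma card_centralizer_add_card_center [Finite K] [Finite L] (y : {x : K // x ∉ center K}) :
    Nat.card (centralizer {(y : K)}) + Nat.card (center L) =
      Nat.card (centralizer {(φ y : L)}) + Nat.card (center K) := by
  rw [card_centralizer_eq, card_centralizer_eq, φ.card_not_adj]
  ring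

end noncommutingGraph

namespace Matrix

variable {F : Type*} [Field F]

lemma eq_zero_of_mulVec_eq_zero_of_mulVec_eq_zero {M : Matrix (Fin 2) (Fin 2) F} {v w : Fin 2 → F}
    (hvw : v 0 * w 1 - v 1 * w 0 ≠ 0) (hv : M *ᵥ v = 0) (hw : M *ᵥ w = 0) : M = 0 := by
  ext i j
  have hvi := congrFun hv i
  have hwi := congrFun hw i
  simp only [mulVec, dotProduct, Fin.sum_univ_two, Pi.zero_apply] at hvi hwi
  refine (mul_eq_zero.mp ?_).resolve_right hvw
  revert j
  refine Fin.forall_fin_two.mpr ⟨?_, ?_⟩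
  · linear_combination w 1 * hvi - v 1 * hwi
  · linear_combination v 0 * hwi - w 0 * hvi

lemma exists_cyclicVector_of_notMem_range_scalar {B : Matrix (Fin 2) (Fin 2) F}
    (hB : B ∉ Set.range (scalar (Fin 2))) :
    ∃ v : Fin 2 → F, v 0 * (B *ᵥ v) 1 - v 1 * (B *ᵥ v) 0 ≠ 0 := by
  by_cases h10 : B 1 0 = 0
  · by_cases h01 : B 0 1 = 0
    · refine ⟨![1, 1], ?_⟩
      have : B 0 0 ≠ B 1 1 := fun h => hB ⟨B 0 0, by
        ext i j; fin_cases i <;> fin_cases j <;> simp [h, h10, h01]⟩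
      simpa [mulVec, dotProduct, h10, h01, sub_eq_zero] using this.symm
    · exact ⟨![0, 1], by simpa [mulVec, dotProduct]⟩
  · exact ⟨![1, 0], by simpa [mulVec, dotProduct]⟩

namespace GeneralLinearGroup

lemma card_center {n : Type*} [Fintype n] [DecidableEq n] [Nonempty n] :
    Nat.card (center (GL n F)) = Nat.card F - 1 := by
  rw [center_eq_range_scalar, ← Nat.card_units F, ← SetLike.coe_sort_coe, MonoidHom.coe_range]
  refine Nat.card_range_of_injective fun a b h => Units.ext ?_
  simpa [Units.ext_iff] using h

lemma mem_centralizer_upperRightHom_iff {t : F} (ht : t ≠ 0) {A : GL (Fin 2) F} :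
    A ∈ centralizer {upperRightHom t} ↔ A 1 0 = 0 ∧ A 0 0 = A 1 1 := by
  have hA := eta_fin_two (A : Matrix (Fin 2) (Fin 2) F)
  rw [mem_centralizer_singleton_iff, Units.ext_iff, Units.val_mul, Units.val_mul,
    upperRightHom_apply, hA]
  simp [ht, add_comm _ (A 0 1 : F), mul_comm t, and_comm]

lemma upperRightHom_one_notMem_center : upperRightHom (1 : F) ∉ center (GL (Fin 2) F) := by
  intro h
  obtain ⟨a, ha⟩ := mem_center_iff_val_mem_range_scalar.mp h
  simpa using congrFun₂ ha 0 1

lemma card_centralizer_upperRightHom [Fintype F] {t : F} (ht : t ≠ 0) :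
    Nat.card (centralizer {upperRightHom t}) = Fintype.card F * (Fintype.card F - 1) := by
  classical
  let e : centralizer {upperRightHom t} ≃ F × Fˣ :=
    { toFun A := (A.1 0 1, Units.mk0 (A.1 0 0) fun h => A.1.det_ne_zero <| by
        simp [det_fin_two, h, ((mem_centralizer_upperRightHom_iff ht).mp A.2).1])
      invFun p := ⟨mkOfDetNeZero !![(p.2 : F), p.1; 0, p.2] (by simp [det_fin_two]),
        (mem_centralizer_upperRightHom_iff ht).mpr (by simp [mkOfDetNeZero])⟩
      left_inv A := by
        obtain ⟨h10, h00⟩ := (mem_centralizer_upperRightHom_iff ht).mp A.2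
        ext i j
        fin_cases i <;> fin_cases j <;> simp [mkOfDetNeZero, h10, h00]
      right_inv p := by ext <;> simp [mkOfDetNeZero] }
  rw [Nat.card_congr e, Nat.card_prod, Nat.card_units, Nat.card_eq_fintype_card]

lemma card_centralizer_le [Fintype F] {B : GL (Fin 2) F} (hB : B ∉ center (GL (Fin 2) F)) :
    Nat.card (centralizer {B}) ≤ Fintype.card F ^ 2 - 1 := by
  classical
  obtain ⟨v, hv⟩ := exists_cyclicVector_of_notMem_range_scalar
    (mt mem_center_iff_val_mem_range_scalar.mpr hB)
  have hv0 : v ≠ 0 := by rintro rfl; simp at hv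
  let f (A : centralizer {B}) : {w : Fin 2 → F // w ≠ 0} :=
    ⟨A.1.val *ᵥ v, fun h => hv0 <| by
      simpa only [mulVec_mulVec, Units.inv_mul, one_mulVec, mulVec_zero]
        using congrArg ((A.1⁻¹).val *ᵥ ·) h⟩
  -- `A - A'` kills both `v` and `B v`
  have hf : f.Injective := by
    intro A A' h
    have hcomm (C : centralizer {B}) : C.1.val * B = B * C.1.val :=
      congrArg Units.val (mem_centralizer_singleton_iff.mp C.2)
    have hv' : (A.1.val - A'.1.val) *ᵥ v = 0 := by
      simpa [sub_mulVec, sub_eq_zero, f] using h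
    have hBv : (A.1.val - A'.1.val) *ᵥ (B *ᵥ v) = 0 := by
      rw [mulVec_mulVec, sub_mul, hcomm, hcomm, ← mul_sub, ← mulVec_mulVec, hv', mulVec_zero]
    exact Subtype.ext <| Units.ext <| sub_eq_zero.mp <|
      eq_zero_of_mulVec_eq_zero_of_mulVec_eq_zero hv hv' hBv
  calc Nat.card (centralizer {B}) ≤ Nat.card {w : Fin 2 → F // w ≠ 0} :=
        Nat.card_le_card_of_injective f hf
    _ = Fintype.card F ^ 2 - 1 := by
        simp [Nat.card_eq_fintype_card, Fintype.card_subtype_compl]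

end GeneralLinearGroup

end Matrix

section IsoGL

variable {F : Type*} [Field F] [Fintype F] {G : Type*} [Group G] [Finite G]
  (φ : noncommutingGraph G ≃g noncommutingGraph (GL (Fin 2) F))
include φ

lemma card_add_card_sub_one_of_iso_gl :
    Nat.card G + (Fintype.card F - 1) =
      (Fintype.card F ^ 2 - 1) * (Fintype.card F ^ 2 - Fintype.card F) + Nat.card (center G) := by
  have := noncommutingGraph.card_add_card_center φ
  simpa only [card_GL_field, Fin.prod_univ_two, Fin.val_zero, Fin.val_one, pow_zero, pow_one,
    card_center, Nat.card_eq_fintype_card (α := F)] using this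

lemma card_center_dvd_of_iso_gl : Nat.card (center G) ∣ Fintype.card F - 1 := by
  let y := φ.symm ⟨_, upperRightHom_one_notMem_center⟩
  have hy := noncommutingGraph.card_centralizer_add_card_center φ y
  rw [φ.apply_symm_apply, card_centralizer_upperRightHom one_ne_zero, card_center,
    Nat.card_eq_fintype_card (α := F)] at hy
  have hcard := card_add_card_sub_one_of_iso_gl φ
  have hzy : Nat.card (center G) ∣ Nat.card (centralizer {(y : G)}) :=
    card_dvd_of_le (center_le_centralizer _)
  have hzG : Nat.card (center G) ∣ Nat.card G := card_subgroup_dvd_card _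
  have hq : 1 ≤ Fintype.card F := Fintype.card_pos
  have hq2 : Fintype.card F ≤ Fintype.card F ^ 2 := Nat.le_self_pow two_ne_zero _
  zify [hq, hq.trans hq2, hq2] at hy hcard hzy hzG ⊢
  -- `|C(y)| = (q - 1)² + |Z(G)|`, and `(q - 1)²` divides `|GL(2, q)|`
  have hsq : (Nat.card (center G) : ℤ) ∣ (Fintype.card F - 1) ^ 2 := by
    rw [show ((Fintype.card F : ℤ) - 1) ^ 2 =
      Nat.card (centralizer {(y : G)}) - Nat.card (center G) by linear_combination -hy]
    exact dvd_sub hzy dvd_rfl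
  rw [show (Fintype.card F : ℤ) - 1 =
      (Fintype.card F - 1) ^ 2 * (Fintype.card F * (Fintype.card F + 1)) -
        (Nat.card G - Nat.card (center G)) by linear_combination hcard]
  exact dvd_sub (hsq.mul_right _) (dvd_sub hzG dvd_rfl)

end IsoGL

theorem not_nilpotent_of_noncommuting_graph_iso_gl_general
    (F : Type*) [Field F] [Fintype F]
    (G : Type*) [Group G]
    (φ : noncommutingGraph G ≃g
      noncommutingGraph (Matrix.GeneralLinearGroup (Fin 2) F)) :
    ¬ Group.IsNilpotent G := by
  intro hG
  obtain ⟨y⟩ : Nonempty {x : G // x ∉ center G} :=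
    ⟨φ.symm ⟨_, upperRightHom_one_notMem_center⟩⟩
  have : Finite {x : G // x ∉ center G} := Finite.of_equiv _ φ.toEquiv.symm
  have : Finite G := finite_of_notMem_center y.2
  obtain ⟨x, hx2, hxZ⟩ := exists_mem_upperCentralSeries_two_notMem_center y.2
  have hGx := card_le_card_center_mul_card_centralizer hx2
  have hCx : Nat.card (centralizer {x}) + (Fintype.card F - 1) ≤
      Fintype.card F ^ 2 - 1 + Nat.card (center G) := by
    have := noncommutingGraph.card_centralizer_add_card_center φ ⟨x, hxZ⟩
    rw [card_center, Nat.card_eq_fintype_card (α := F)] at this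
    exact this ▸ Nat.add_le_add_right (card_centralizer_le (φ ⟨x, hxZ⟩).2) _
  have hcard := card_add_card_sub_one_of_iso_gl φ
  have hq : 2 ≤ Fintype.card F := Fintype.one_lt_card
  have hz := Nat.le_of_dvd (by omega) (card_center_dvd_of_iso_gl φ)
  have hq2 : Fintype.card F ≤ Fintype.card F ^ 2 := Nat.le_self_pow two_ne_zero _
  zify [hq2, (by omega : 1 ≤ Fintype.card F), (by omega : 1 ≤ Fintype.card F).trans hq2] at *
  -- `|G| ≤ |Z(G)| |C_G(x)| ≤ (q - 1)(q² - 1)`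
  nlinarith [mul_le_mul_of_nonneg_right hz (Nat.cast_nonneg (α := ℤ) (Nat.card (centralizer {x}))),
    mul_le_mul_of_nonneg_left hCx (by omega : (0 : ℤ) ≤ Fintype.card F - 1)]

theorem not_nilpotent_of_noncommuting_graph_iso_gl
    (q : ℕ) (hq : IsPrimePow q) (hq3 : 3 < q)
    (F : Type*) [Field F] [Fintype F] (hF : Fintype.card F = q)
    (G : Type*) [Group G]
    (φ : noncommutingGraph G ≃g
      noncommutingGraph (Matrix.GeneralLinearGroup (Fin 2) F)) :
    ¬ Group.IsNilpotent G :=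
  not_nilpotent_of_noncommuting_graph_iso_gl_general F G φ
end
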